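/- arXiv:1607.08453 — 4 statements merged into one kernel-verified Lean document; each statement's English description precedes it below -/
import Mathlib

section
/- If f is a surjective domatic homomorphism from H to F, then the map g defined by g((u,v)) = (u, f(v)) is a surjective domatic homomorphism from the Cartesian product G □ H to G □ F. -/
/-- Cartesian (box) product of simple graphs. -/
def cartProd {α β : Type*} (G : SimpleGraph α) (H : SimpleGraph β) : SimpleGraph (α × β) where
  Adj a b := (a.1 = b.1 ∧ H.Adj a.2 b.2) ∨ (G.Adj a.1 b.1 ∧ a.2 = b.2)
  symm := by
    constructor
    rintro a b (⟨h1, h2⟩ | ⟨h1, h2⟩)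
    · exact Or.inl ⟨h1.symm, h2.symm⟩
    · exact Or.inr ⟨h1.symm, h2.symm⟩
  loopless := by constructor; rintro a (⟨-, h⟩ | ⟨h, -⟩) <;> exact h.ne rfl

/-- A domatic homomorphism. -/
def IsDomatic {α β : Type*} (G : SimpleGraph α) (H : SimpleGraph β) (f : α → β) : Prop :=
  ∀ ⦃u' v'⦄, H.Adj u' v' → ∀ u, f u = u' → ∃ v, f v = v' ∧ G.Adj u v

namespace IsDomatic

variable {α β γ δ : Type*} {G : SimpleGraph α} {H : SimpleGraph β} {G' : SimpleGraph γ}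
  {F : SimpleGraph δ}

protected theorem id (G : SimpleGraph α) : IsDomatic G G id := by
  rintro _ v' hadj _ rfl
  exact ⟨v', rfl, hadj⟩

/-- A domatic lift of a product edge moves only in the coordinate in which the edge moves. -/
theorem prodMap {g : α → γ} {f : β → δ} (hg : IsDomatic G G' g) (hf : IsDomatic H F f) :
    IsDomatic (cartProd G H) (cartProd G' F) (Prod.map g f) := by
  rintro ⟨a', c'⟩ ⟨b', d'⟩ (⟨rfl, hadj⟩ | ⟨hadj, rfl⟩) ⟨a, c⟩ hu <;>
    obtain ⟨rfl, rfl⟩ := Prod.mk.inj hu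
  · obtain ⟨v, rfl, hcv⟩ := hf hadj c rfl
    exact ⟨(a, v), rfl, Or.inl ⟨rfl, hcv⟩⟩
  · obtain ⟨w, rfl, haw⟩ := hg hadj a rfl
    exact ⟨(w, c), rfl, Or.inr ⟨haw, rfl⟩⟩

end IsDomatic

theorem stmt7 {α β γ : Type*} (G : SimpleGraph α) (H : SimpleGraph β) (F : SimpleGraph γ)
    (f : β → γ) (hf : IsDomatic H F f) (hsurj : Function.Surjective f) :
    IsDomatic (cartProd G H) (cartProd G F) (fun x => (x.1, f x.2)) ∧
      Function.Surjective (fun x : α × β => (x.1, f x.2)) :=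
  ⟨(IsDomatic.id G).prodMap hf, Function.surjective_id.prodMap hsurj⟩
end

section
/- For positive integers p ≤ q, every fall-coloring of the Cartesian product K_p □ K_q uses exactly q colors; that is, the fall-spectrum of K_p □ K_q equals {max(p,q)}. -/
/-- A fall-coloring with `k` colors: a proper coloring in which every vertex is a b-vertex. -/
def IsFallColoring {α : Type*} (G : SimpleGraph α) (k : ℕ) (f : α → Fin k) : Prop :=
  (∀ ⦃a b⦄, G.Adj a b → f a ≠ f b) ∧
  ∀ a : α, ∀ c : Fin k, c ≠ f a → ∃ b, G.Adj a b ∧ f b = c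

/-!
A row of the rook's graph `K_p □ K_q` is a clique on `q` vertices, so it receives `q` distinct
colors. If some color `c` were missing from a row `i`, every vertex `(i, j)` would have to see `c`
in its column, at some `(h j, j)` with `h j ≠ i`; two of these vertices in the same row would be
adjacent, so `h` embeds the `q` columns into the `p - 1` other rows, impossible when `p ≤ q`.
Hence every row is rainbow and exactly `q` colors are used. Conversely the Latin square
`(i, j) ↦ i + j mod q` is a fall-coloring with `q` colors.
-/

@[simp]
theorem cartProd_top_adj {α β : Type*} {a b : α × β} :
    (cartProd (⊤ : SimpleGraph α) (⊤ : SimpleGraph β)).Adj a b ↔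
      (a.1 = b.1 ∧ a.2 ≠ b.2) ∨ (a.1 ≠ b.1 ∧ a.2 = b.2) := by
  simp [cartProd]

namespace IsFallColoring

variable {α β : Type*} {k : ℕ} {f : α × β → Fin k}

theorem injective_row (hf : IsFallColoring (cartProd ⊤ ⊤) k f) (i : α) :
    Function.Injective fun j => f (i, j) := by
  intro j j' hjj'
  by_contra hne
  have hadj : (cartProd ⊤ ⊤).Adj (i, j) (i, j') := cartProd_top_adj.2 (Or.inl ⟨rfl, hne⟩)
  exact hf.1 hadj hjj'

theorem surjective_row [Finite α] [Finite β] (hf : IsFallColoring (cartProd ⊤ ⊤) k f)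
    (hcard : Nat.card α ≤ Nat.card β) (i : α) :
    Function.Surjective fun j => f (i, j) := by
  intro c
  by_contra! hc
  have hcol : ∀ j, ∃ i' : {i' // i' ≠ i}, f (i', j) = c := by
    intro j
    obtain ⟨⟨i', j'⟩, hadj, hb⟩ := hf.2 (i, j) c (hc j).symm
    rcases cartProd_top_adj.1 hadj with ⟨rfl, -⟩ | ⟨hi, rfl⟩
    · exact absurd hb (hc j')
    · exact ⟨⟨i', Ne.symm hi⟩, hb⟩
  choose h hh using hcol
  have h_inj : Function.Injective h := by
    intro j j' hjj'
    by_contra hne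
    have hadj : (cartProd ⊤ ⊤).Adj ((h j : α), j) ((h j' : α), j') :=
      cartProd_top_adj.2 (Or.inl ⟨congrArg Subtype.val hjj', hne⟩)
    exact hf.1 hadj ((hh j).trans (hh j').symm)
  exact (Nat.card_le_card_of_injective h h_inj).not_gt
    ((Finite.card_subtype_lt (p := (· ≠ i)) (not_not_intro rfl)).trans_le hcard)

theorem eq_natCard [Finite α] [Finite β] (hf : IsFallColoring (cartProd ⊤ ⊤) k f)
    (hcard : Nat.card α ≤ Nat.card β) (i : α) : k = Nat.card β := by
  simpa using (Nat.card_eq_of_bijective _ ⟨hf.injective_row i, hf.surjective_row hcard i⟩).symm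

end IsFallColoring

theorem isFallColoring_add {α : Type*} {q : ℕ} [NeZero q] {g : α → Fin q}
    (hg : Function.Injective g) :
    IsFallColoring (cartProd ⊤ ⊤) q fun a : α × Fin q => g a.1 + a.2 := by
  constructor
  · rintro ⟨i, j⟩ ⟨i', j'⟩ hadj heq
    rcases cartProd_top_adj.1 hadj with ⟨rfl, hj⟩ | ⟨hi, rfl⟩
    · exact hj (add_left_cancel heq)
    · exact hi (hg (add_right_cancel heq))
  · rintro ⟨i, j⟩ c hc
    refine ⟨(i, c - g i), cartProd_top_adj.2 (Or.inl ⟨rfl, ?_⟩), add_sub_cancel (g i) c⟩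
    rintro rfl
    exact hc (add_sub_cancel (g i) c).symm

theorem stmt14 (p q : ℕ) (hp : 0 < p) (hpq : p ≤ q) (k : ℕ) :
    (∃ f : Fin p × Fin q → Fin k,
      IsFallColoring (cartProd (⊤ : SimpleGraph (Fin p)) (⊤ : SimpleGraph (Fin q))) k f) ↔
    k = max p q := by
  rw [max_eq_right hpq]
  constructor
  · rintro ⟨f, hf⟩
    simpa using hf.eq_natCard (by simpa using hpq) ⟨0, hp⟩
  · rintro rfl
    have : NeZero k := ⟨by omega⟩
    exact ⟨_, isFallColoring_add (Fin.castLE_injective hpq)⟩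
end

section
/- For integers p, q ≥ 2, every b-coloring of the direct product K_p × K_q is either the 'row coloring' (coloring (u_i, v_j) with i) or the 'column coloring' (coloring (u_i, v_j) with j), up to renaming colors; consequently the set of numbers of colors of b-colorings of K_p × K_q is exactly {p, q}. -/
/-- Direct (tensor) product of simple graphs. -/
def tensorProd {α β : Type*} (G : SimpleGraph α) (H : SimpleGraph β) : SimpleGraph (α × β) where
  Adj a b := G.Adj a.1 b.1 ∧ H.Adj a.2 b.2
  symm := ⟨by rintro a b ⟨h1, h2⟩; exact ⟨h1.symm, h2.symm⟩⟩
  loopless := ⟨by rintro a ⟨h, -⟩; exact h.ne rfl⟩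

/-- A b-coloring with `k` colors: proper, all colors used, each class has a b-vertex. -/
def IsBColoring {α : Type*} (G : SimpleGraph α) (k : ℕ) (f : α → Fin k) : Prop :=
  (∀ ⦃a b⦄, G.Adj a b → f a ≠ f b) ∧ Function.Surjective f ∧
  ∀ c : Fin k, ∃ a, f a = c ∧ ∀ c' : Fin k, c' ≠ c → ∃ b, G.Adj a b ∧ f b = c'

/-!
Two vertices of `K_p × K_q` are non-adjacent iff they share a row or a column, so a colour
class with two vertices in different columns lies in one row, and one with two vertices in
different rows lies in one column. If there were both a row class `R` (in row `i`) and a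
column class `C` (in column `j`), take b-vertices `a ∈ R` and `a' ∈ C`; seeing `C` and `R`
forces `a` off column `j` and `a'` off row `i`. The colour of `e = (a'.1, a.2)` is neither
that of `R` nor of `C`; since `a` sees this colour off column `a.2`, its class lies in row
`a'.1`, and then `a'` cannot see it. Hence all classes lie in rows or all in columns, and the
b-vertices then force every row (resp. column) to be monochromatic.
-/

section General

variable {α β γ δ : Type*} {k : ℕ}

def IsBVertex (G : SimpleGraph γ) (f : γ → Fin k) (a : γ) : Prop :=
  ∀ c, c ≠ f a → ∃ b, G.Adj a b ∧ f b = c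

theorem IsBColoring.exists_isBVertex {G : SimpleGraph γ} {f : γ → Fin k}
    (hB : IsBColoring G k f) (c : Fin k) : ∃ a, f a = c ∧ IsBVertex G f a := by
  obtain ⟨a, rfl, ha⟩ := hB.2.2 c
  exact ⟨a, rfl, ha⟩

theorem IsBColoring.comp_iso {G : SimpleGraph γ} {G' : SimpleGraph δ} {f : γ → Fin k}
    (hB : IsBColoring G k f) (e : G' ≃g G) : IsBColoring G' k (f ∘ e) := by
  obtain ⟨hproper, hsurj, hbv⟩ := hB
  refine ⟨fun a b hab => hproper (e.map_adj_iff.mpr hab), hsurj.comp e.surjective, fun c => ?_⟩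
  obtain ⟨a, rfl, ha⟩ := hbv c
  refine ⟨e.symm a, by simp, fun c' hc' => ?_⟩
  obtain ⟨b, hab, rfl⟩ := ha c' hc'
  exact ⟨e.symm b, e.symm.map_adj_iff.mpr hab, by simp⟩

def tensorProdComm (G : SimpleGraph α) (H : SimpleGraph β) :
    tensorProd H G ≃g tensorProd G H where
  toEquiv := Equiv.prodComm β α
  map_rel_iff' := and_comm

theorem tensorProd_top_adj {x y : α × β} :
    (tensorProd (⊤ : SimpleGraph α) (⊤ : SimpleGraph β)).Adj x y ↔ x.1 ≠ y.1 ∧ x.2 ≠ y.2 := by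
  simp [tensorProd]

end General

section CompleteProduct

variable {α β : Type*} {k : ℕ} {f : α × β → Fin k}

theorem fst_eq_or_snd_eq_of_color_eq
    (hf : ∀ ⦃a b⦄, (tensorProd (⊤ : SimpleGraph α) (⊤ : SimpleGraph β)).Adj a b → f a ≠ f b)
    {x y : α × β} (h : f x = f y) : x.1 = y.1 ∨ x.2 = y.2 := by
  by_contra! hne
  exact hf (tensorProd_top_adj.mpr hne) h

theorem fst_eq_of_color_eq_of_snd_ne
    (hf : ∀ ⦃a b⦄, (tensorProd (⊤ : SimpleGraph α) (⊤ : SimpleGraph β)).Adj a b → f a ≠ f b)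
    {x y : α × β} (hxy : f x = f y) (hne : x.2 ≠ y.2) {u : α × β} (hu : f u = f x) :
    u.1 = x.1 := by
  have hrow := (fst_eq_or_snd_eq_of_color_eq hf hxy).resolve_right hne
  rcases fst_eq_or_snd_eq_of_color_eq hf hu with h | hux
  · exact h
  · rcases fst_eq_or_snd_eq_of_color_eq hf (hu.trans hxy) with h | huy
    · exact h.trans hrow.symm
    · exact absurd (hux.symm.trans huy) hne

theorem snd_eq_of_color_eq_of_fst_ne
    (hf : ∀ ⦃a b⦄, (tensorProd (⊤ : SimpleGraph α) (⊤ : SimpleGraph β)).Adj a b → f a ≠ f b)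
    {x y : α × β} (hxy : f x = f y) (hne : x.1 ≠ y.1) {u : α × β} (hu : f u = f x) :
    u.2 = x.2 := by
  have hcol := (fst_eq_or_snd_eq_of_color_eq hf hxy).resolve_left hne
  rcases fst_eq_or_snd_eq_of_color_eq hf hu with hux | h
  · rcases fst_eq_or_snd_eq_of_color_eq hf (hu.trans hxy) with huy | h
    · exact absurd (hux.symm.trans huy) hne
    · exact h.trans hcol.symm
  · exact h

theorem IsBVertex.fst_ne {a : α × β}
    (ha : IsBVertex (tensorProd (⊤ : SimpleGraph α) (⊤ : SimpleGraph β)) f a)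
    {c : Fin k} (hc : c ≠ f a) {r : α} (hrow : ∀ u, f u = c → u.1 = r) : a.1 ≠ r := by
  obtain ⟨b, hab, hb⟩ := ha c hc
  exact hrow b hb ▸ (tensorProd_top_adj.mp hab).1

theorem IsBVertex.snd_ne {a : α × β}
    (ha : IsBVertex (tensorProd (⊤ : SimpleGraph α) (⊤ : SimpleGraph β)) f a)
    {c : Fin k} (hc : c ≠ f a) {s : β} (hcol : ∀ u, f u = c → u.2 = s) : a.2 ≠ s := by
  obtain ⟨b, hab, hb⟩ := ha c hc
  exact hcol b hb ▸ (tensorProd_top_adj.mp hab).2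

theorem IsBColoring.not_row_class_and_column_class
    (hB : IsBColoring (tensorProd (⊤ : SimpleGraph α) (⊤ : SimpleGraph β)) k f)
    {x y z w : α × β} (hxy : f x = f y) (hx : x.2 ≠ y.2) (hzw : f z = f w) (hz : z.1 ≠ w.1) :
    False := by
  have hrow : ∀ u, f u = f x → u.1 = x.1 := fun u => fst_eq_of_color_eq_of_snd_ne hB.1 hxy hx
  have hcol : ∀ u, f u = f z → u.2 = z.2 := fun u => snd_eq_of_color_eq_of_fst_ne hB.1 hzw hz
  have hxz : f z ≠ f x := fun h =>
    hz ((hrow z h).trans (hrow w (hzw.symm.trans h)).symm)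
  obtain ⟨a, hax, ha⟩ := hB.exists_isBVertex (f x)
  obtain ⟨a', ha'z, ha'⟩ := hB.exists_isBVertex (f z)
  have ha'_row : a'.1 ≠ x.1 := ha'.fst_ne (ha'z ▸ hxz.symm) hrow
  have ha_col : a.2 ≠ z.2 := ha.snd_ne (hax ▸ hxz) hcol
  set e : α × β := (a'.1, a.2)
  have hea : f e ≠ f a := hax ▸ fun h => ha'_row (hrow e h)
  have hea' : f e ≠ f a' := ha'z ▸ fun h => ha_col (hcol e h)
  obtain ⟨b, hab, hbe⟩ := ha (f e) hea
  have he_row : ∀ u, f u = f e → u.1 = a'.1 := fun u =>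
    fst_eq_of_color_eq_of_snd_ne hB.1 hbe.symm (tensorProd_top_adj.mp hab).2
  exact ha'.fst_ne hea' he_row rfl

theorem IsBColoring.classes_in_rows_or_classes_in_columns
    (hB : IsBColoring (tensorProd (⊤ : SimpleGraph α) (⊤ : SimpleGraph β)) k f) :
    (∀ x y, f x = f y → x.1 = y.1) ∨ (∀ x y, f x = f y → x.2 = y.2) := by
  by_contra! h
  obtain ⟨⟨z, w, hzw, hz⟩, ⟨x, y, hxy, hx⟩⟩ := h
  exact hB.not_row_class_and_column_class hxy hx hzw hz

theorem IsBColoring.color_eq_of_snd_eq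
    (hB : IsBColoring (tensorProd (⊤ : SimpleGraph α) (⊤ : SimpleGraph β)) k f)
    (hcol : ∀ x y, f x = f y → x.2 = y.2) {x y : α × β} (h : x.2 = y.2) : f x = f y := by
  by_contra hne
  obtain ⟨a, hax, ha⟩ := hB.exists_isBVertex (f x)
  exact ha.snd_ne (hax ▸ Ne.symm hne) (fun u hu => hcol u y hu) ((hcol a x hax).trans h)

theorem IsBColoring.comp_swap
    (hB : IsBColoring (tensorProd (⊤ : SimpleGraph α) (⊤ : SimpleGraph β)) k f) :
    IsBColoring (tensorProd (⊤ : SimpleGraph β) (⊤ : SimpleGraph α)) k (f ∘ Prod.swap) :=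
  hB.comp_iso (tensorProdComm _ _)

theorem IsBColoring.row_or_column
    (hB : IsBColoring (tensorProd (⊤ : SimpleGraph α) (⊤ : SimpleGraph β)) k f) :
    (∀ x y, f x = f y ↔ x.1 = y.1) ∨ (∀ x y, f x = f y ↔ x.2 = y.2) := by
  rcases hB.classes_in_rows_or_classes_in_columns with hrow | hcol
  · refine Or.inl fun x y => ⟨hrow x y, fun h => ?_⟩
    exact hB.comp_swap.color_eq_of_snd_eq (fun u v => hrow u.swap v.swap) (x := x.swap) (y := y.swap) h
  · exact Or.inr fun x y => ⟨hcol x y, hB.color_eq_of_snd_eq hcol⟩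

theorem card_eq_of_color_eq_iff_fst_eq [Fintype α] [Nonempty β] (hsurj : Function.Surjective f)
    (hrow : ∀ x y, f x = f y ↔ x.1 = y.1) : k = Fintype.card α := by
  obtain ⟨b⟩ := ‹Nonempty β›
  have hbij : Function.Bijective fun i => f (i, b) :=
    ⟨fun i j h => (hrow _ _).mp h, fun c => by
      obtain ⟨x, rfl⟩ := hsurj c
      exact ⟨x.1, (hrow _ _).mpr rfl⟩⟩
  simpa using (Fintype.card_of_bijective hbij).symm

theorem isBColoring_fst {p : ℕ} [Nontrivial β] :
    IsBColoring (tensorProd (⊤ : SimpleGraph (Fin p)) (⊤ : SimpleGraph β)) p Prod.fst := by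
  obtain ⟨b, b', hbb'⟩ := exists_pair_ne β
  refine ⟨fun x y hxy => (tensorProd_top_adj.mp hxy).1, fun i => ⟨(i, b), rfl⟩, fun i => ?_⟩
  exact ⟨(i, b), rfl, fun j hj => ⟨(j, b'), tensorProd_top_adj.mpr ⟨hj.symm, hbb'⟩, rfl⟩⟩

end CompleteProduct

theorem stmt15 (p q : ℕ) (hp : 2 ≤ p) (hq : 2 ≤ q) :
    (∀ (k : ℕ) (f : Fin p × Fin q → Fin k),
      IsBColoring (tensorProd (⊤ : SimpleGraph (Fin p)) (⊤ : SimpleGraph (Fin q))) k f →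
        (∀ x y : Fin p × Fin q, f x = f y ↔ x.1 = y.1) ∨
        (∀ x y : Fin p × Fin q, f x = f y ↔ x.2 = y.2)) ∧
    (∀ k : ℕ, (∃ f : Fin p × Fin q → Fin k,
      IsBColoring (tensorProd (⊤ : SimpleGraph (Fin p)) (⊤ : SimpleGraph (Fin q))) k f) ↔
        (k = p ∨ k = q)) := by
  have : Nontrivial (Fin p) := Fin.nontrivial_iff_two_le.mpr hp
  have : Nontrivial (Fin q) := Fin.nontrivial_iff_two_le.mpr hq
  refine ⟨fun k f hB => hB.row_or_column, fun k => ⟨?_, ?_⟩⟩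
  · rintro ⟨f, hB⟩
    rcases hB.row_or_column with hrow | hcol
    · simpa using Or.inl (card_eq_of_color_eq_iff_fst_eq hB.2.1 hrow)
    · have := card_eq_of_color_eq_iff_fst_eq hB.comp_swap.2.1 fun x y => hcol x.swap y.swap
      simpa using Or.inr this
  · rintro (rfl | rfl)
    · exact ⟨Prod.fst, isBColoring_fst⟩
    · exact ⟨Prod.snd, (isBColoring_fst (β := Fin p)).comp_swap⟩
end

section
/- Let G be a graph with χ(G) ≥ 2 admitting a fall-coloring with k colors, and let H be a graph with no isolated vertices. Then the direct product G × H admits a fall-coloring with k colors, obtained by coloring (u,v) with the color of u. -/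
theorem IsFallColoring.comp_hom {α γ : Type*} {G : SimpleGraph α} {G' : SimpleGraph γ} {k : ℕ}
    {f : α → Fin k} (hf : IsFallColoring G k f) (φ : G' →g G)
    (hφ : ∀ a b, G.Adj (φ a) b → ∃ b', G'.Adj a b' ∧ φ b' = b) :
    IsFallColoring G' k (f ∘ φ) := by
  obtain ⟨hproper, hdominating⟩ := hf
  refine ⟨fun a b hab => hproper (φ.map_adj hab), fun a c hc => ?_⟩
  obtain ⟨b, hab, rfl⟩ := hdominating (φ a) c hc
  obtain ⟨b', hab', rfl⟩ := hφ a b hab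
  exact ⟨b', hab', rfl⟩

def tensorProd.fst {α β : Type*} (G : SimpleGraph α) (H : SimpleGraph β) : tensorProd G H →g G :=
  ⟨Prod.fst, fun h => h.1⟩

theorem tensorProd.exists_adj_fst_eq {α β : Type*} {G : SimpleGraph α} {H : SimpleGraph β}
    (hiso : ∀ v : β, ∃ w, H.Adj v w) (x : α × β) {b : α} (hb : G.Adj x.1 b) :
    ∃ y, (tensorProd G H).Adj x y ∧ y.1 = b := by
  obtain ⟨w, hw⟩ := hiso x.2
  exact ⟨(b, w), ⟨hb, hw⟩, rfl⟩

theorem stmt18_general {α β : Type*} (G : SimpleGraph α) (H : SimpleGraph β) (k : ℕ)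
    (f : α → Fin k) (hf : IsFallColoring G k f)
    (hiso : ∀ v : β, ∃ w, H.Adj v w) :
    IsFallColoring (tensorProd G H) k (fun x => f x.1) :=
  hf.comp_hom (tensorProd.fst G H) fun x _ hb => tensorProd.exists_adj_fst_eq hiso x hb

theorem stmt18 {α β : Type*} (G : SimpleGraph α) (H : SimpleGraph β) (k : ℕ)
    (f : α → Fin k) (hf : IsFallColoring G k f)
    (hchi : 2 ≤ G.chromaticNumber) (hiso : ∀ v : β, ∃ w, H.Adj v w) :
    IsFallColoring (tensorProd G H) k (fun x => f x.1) :=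
  stmt18_general G H k f hf hiso
end
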